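/- Let K ≥ 0, fix a predicted score vector s ∈ ℝ^{K+1}, and for t ∈ ℝ define g(t) ∈ ℝ^{K+1} by g(t)_0 = 0 and g(t)_k = −t for k = 1,…,K. Then the ListNet cross-entropy loss converges to the InfoNCE term as t → ∞: lim_{t→∞} ( −Σ_{k=0}^K σ(g(t))_k · log σ(s)_k ) = −log σ(s)_0 = −log( exp(s_0) / Σ_{j=0}^K exp(s_j) ). -/
import Mathlib


open Real Finset Filter

/-- As the ground-truth scores of the negative pairs tend to `-∞`
(i.e. `t → ∞` with `(g t) 0 = 0` and `(g t) k = -t` for `k ≠ 0`), the ListNet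
cross-entropy loss `-∑ k σ(g t)_k log σ(s)_k` converges to the InfoNCE term
`-log(exp s_0 / ∑ j exp s_j)`. -/
theorem listNet_tendsto_infoNCE (K : ℕ) (s : Fin (K + 1) → ℝ)
    (g : ℝ → Fin (K + 1) → ℝ)
    (hg0 : ∀ t : ℝ, g t 0 = 0)
    (hgk : ∀ t : ℝ, ∀ k : Fin (K + 1), k ≠ 0 → g t k = -t) :
    Tendsto (fun t : ℝ =>
        -∑ k : Fin (K + 1),
          (Real.exp (g t k) / ∑ j : Fin (K + 1), Real.exp (g t j)) *
            Real.log (Real.exp (s k) / ∑ j : Fin (K + 1), Real.exp (s j)))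
      atTop
      (nhds (-Real.log (Real.exp (s 0) / ∑ j : Fin (K + 1), Real.exp (s j)))) := by
  set L : Fin (K + 1) → ℝ :=
    fun k => Real.log (Real.exp (s k) / ∑ j : Fin (K + 1), Real.exp (s j)) with hL
  have hsum : ∀ t : ℝ,
      ∑ j : Fin (K + 1), Real.exp (g t j) = 1 + (K : ℝ) * Real.exp (-t) := by
    intro t
    rw [Fin.sum_univ_succ]
    have h1 : ∀ i : Fin K, Real.exp (g t i.succ) = Real.exp (-t) := fun i => by
      rw [hgk t i.succ (Fin.succ_ne_zero i)]
    simp [hg0, h1, mul_comm]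
  have he : Tendsto (fun t : ℝ => Real.exp (-t)) atTop (nhds 0) := by
    exact Real.tendsto_exp_atBot.comp tendsto_neg_atTop_atBot
  have hden : Tendsto (fun t : ℝ => 1 + (K : ℝ) * Real.exp (-t)) atTop (nhds 1) := by
    have h := ((tendsto_const_nhds (x := (1:ℝ)) (f := atTop)).add (he.const_mul (K : ℝ)))
    simpa using h
  have hmain : Tendsto (fun t : ℝ =>
      ∑ k : Fin (K + 1), (Real.exp (g t k) / ∑ j : Fin (K + 1), Real.exp (g t j)) * L k)
      atTop (nhds (L 0)) := by
    have heq : (fun t : ℝ =>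
        ∑ k : Fin (K + 1), (Real.exp (g t k) / ∑ j : Fin (K + 1), Real.exp (g t j)) * L k)
        = fun t : ℝ =>
          (1 / (1 + (K : ℝ) * Real.exp (-t))) * L 0 +
          ∑ i : Fin K, (Real.exp (-t) / (1 + (K : ℝ) * Real.exp (-t))) * L i.succ := by
      funext t
      rw [Fin.sum_univ_succ, hg0, hsum t, Real.exp_zero]
      congr 1
      refine Finset.sum_congr rfl fun i _ => ?_
      rw [hgk t i.succ (Fin.succ_ne_zero i)]
    rw [heq]
    have h1 : Tendsto (fun t : ℝ => (1 / (1 + (K : ℝ) * Real.exp (-t))) * L 0)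
        atTop (nhds (L 0)) := by
      have h := ((tendsto_const_nhds (x := (1:ℝ)) (f := atTop)).div hden one_ne_zero).mul
        (tendsto_const_nhds (x := L 0) (f := atTop))
      simpa using h
    have h2 : Tendsto (fun t : ℝ =>
        ∑ i : Fin K, (Real.exp (-t) / (1 + (K : ℝ) * Real.exp (-t))) * L i.succ)
        atTop (nhds 0) := by
      have : Tendsto (fun t : ℝ =>
          ∑ i : Fin K, (Real.exp (-t) / (1 + (K : ℝ) * Real.exp (-t))) * L i.succ)
          atTop (nhds (∑ _i : Fin K, (0 : ℝ))) := by
        refine tendsto_finset_sum _ fun i _ => ?_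
        have h := (he.div hden one_ne_zero).mul (tendsto_const_nhds (x := L i.succ) (f := atTop))
        simpa using h
      simpa using this
    simpa using h1.add h2
  simpa using hmain.neg
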